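/- Let M ∈ ℝ^{d×d} be a symmetric matrix of rank at most k, and let M̂ be a symmetric matrix with ‖M − M̂‖_op ≤ η. Let V be the span of the top-k singular vectors of M̂, and for a unit vector u let u' = proj_V(u), r = u − u'. If rᵀMr ≥ C₁·⟨r,u⟩² − C₂ for constants C₁ > 0, C₂ ≥ 0, then ‖r‖ ≤ √(2η/C₁) + (C₂/C₁)^{1/4}. -/

import Mathlib

open scoped Matrix.Norms.L2Operator
open Module

lemma sqrt_add_le'' (x y : ℝ) (hx : 0 ≤ x) (hy : 0 ≤ y) :
    Real.sqrt (x + y) ≤ Real.sqrt x + Real.sqrt y := by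
  have h1 := Real.sq_sqrt hx
  have h2 := Real.sq_sqrt hy
  have hxy : x + y ≤ (Real.sqrt x + Real.sqrt y) ^ 2 := by
    nlinarith [Real.sqrt_nonneg x, Real.sqrt_nonneg y]
  calc Real.sqrt (x + y) ≤ Real.sqrt ((Real.sqrt x + Real.sqrt y) ^ 2) := Real.sqrt_le_sqrt hxy
    _ = Real.sqrt x + Real.sqrt y := by
        rw [Real.sqrt_sq (by positivity)]

lemma quad_solve (C₁ C₂ η t : ℝ) (hC₁ : 0 < C₁) (hC₂ : 0 ≤ C₂) (hη : 0 ≤ η)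
    (ht : 0 ≤ t) (h : C₁ * t ^ 2 - C₂ ≤ 2 * η * t) :
    t ≤ 2 * η / C₁ + Real.sqrt (C₂ / C₁) := by
  set s := Real.sqrt (C₂ / C₁) with hs
  have hs0 : 0 ≤ s := Real.sqrt_nonneg _
  have hs2 : s ^ 2 = C₂ / C₁ := Real.sq_sqrt (by positivity)
  have hA : 0 ≤ 2 * η / C₁ := by positivity
  have ht2 : t ^ 2 ≤ (2 * η / C₁) * t + s ^ 2 := by
    rw [hs2]
    have h2 : t ^ 2 ≤ (2 * η * t + C₂) / C₁ := (le_div_iff₀ hC₁).mpr (by nlinarith)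
    calc t ^ 2 ≤ (2 * η * t + C₂) / C₁ := h2
      _ = (2 * η / C₁) * t + C₂ / C₁ := by ring
  nlinarith [sq_nonneg (t - s), mul_nonneg hA hs0, mul_nonneg hA ht, mul_nonneg hs0 ht]

lemma helper_swap {d : ℕ} (s : Finset (Fin d)) (co : Fin d → ℝ) (f : Fin d → Fin d → ℝ)
    (g : Fin d → ℝ) :
    (∑ a, (∑ j ∈ s, co j * f j a) * g a) = ∑ j ∈ s, co j * ∑ a, f j a * g a := by
  simp_rw [Finset.sum_mul, Finset.mul_sum, mul_assoc]
  exact Finset.sum_comm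

set_option maxHeartbeats 2000000 in
/-- PCA recovery bound: let `M` be symmetric of rank at most `k`, `M̂` symmetric with
`‖M − M̂‖_op ≤ η`, and let `V` be the span of the top-`k` singular (eigen)vectors of
`M̂`, described by an orthonormal eigenbasis `f` with eigenvalues `μ` sorted by
decreasing absolute value. If `u` is a unit vector, `u' = proj_V u` and `r = u − u'`
satisfies `rᵀ M r ≥ C₁⟨r,u⟩² − C₂`, then `‖r‖ ≤ √(2η/C₁) + (C₂/C₁)^{1/4}`. -/
theorem pca_subspace_recovery (d k : ℕ) (M Mhat : Matrix (Fin d) (Fin d) ℝ)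
    (hMsymm : M.transpose = M) (hMhatsymm : Mhat.transpose = Mhat)
    (hrank : M.rank ≤ k) (η : ℝ) (hη0 : 0 ≤ η) (hclose : ‖M - Mhat‖ ≤ η)
    (f : Fin d → (Fin d → ℝ)) (μ : Fin d → ℝ)
    (horth : ∀ i j, (∑ a, f i a * f j a) = if i = j then (1 : ℝ) else 0)
    (heig : ∀ i, Mhat.mulVec (f i) = μ i • f i)
    (hsort : ∀ i j : Fin d, i ≤ j → |μ j| ≤ |μ i|)
    (u u' r : Fin d → ℝ) (hunit : ∑ a, u a ^ 2 = 1)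
    (hu' : u' = ∑ i ∈ Finset.univ.filter (fun i : Fin d => (i : ℕ) < k),
        (∑ a, u a * f i a) • f i)
    (hr : r = u - u')
    (C₁ C₂ : ℝ) (hC₁ : 0 < C₁) (hC₂ : 0 ≤ C₂)
    (hquad : C₁ * (∑ a, r a * u a) ^ 2 - C₂ ≤ ∑ a, r a * (M.mulVec r) a) :
    Real.sqrt (∑ a, r a ^ 2)
      ≤ Real.sqrt (2 * η / C₁) + Real.sqrt (Real.sqrt (C₂ / C₁)) := by
  classical
  -- trivial case d = 0
  rcases Nat.eq_zero_or_pos d with hd0 | hdpos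
  · subst hd0
    simp only [Finset.univ_eq_empty, Finset.sum_empty]
    rw [Real.sqrt_zero]
    positivity
  have : NeZero d := ⟨by omega⟩
  let toE : (Fin d → ℝ) → EuclideanSpace ℝ (Fin d) :=
    fun v => (WithLp.equiv 2 (Fin d → ℝ)).symm v
  have hE : ∀ x y : Fin d → ℝ, (inner ℝ (toE x) (toE y) : ℝ) = ∑ a, x a * y a := by
    intro x y
    rw [PiLp.inner_apply]
    simp [RCLike.inner_apply, toE, WithLp.equiv_symm_apply]
    exact Finset.sum_congr rfl fun a _ => mul_comm _ _
  have horthF : Orthonormal ℝ (fun i => toE (f i)) := by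
    rw [orthonormal_iff_ite]
    intro i j
    rw [hE]
    simpa using horth i j
  -- orthonormal basis
  have hcard : Fintype.card (Fin d) = finrank ℝ (EuclideanSpace ℝ (Fin d)) := by simp
  let b0 : Basis (Fin d) ℝ (EuclideanSpace ℝ (Fin d)) :=
    basisOfLinearIndependentOfCardEqFinrank horthF.linearIndependent hcard
  have hb0 : ⇑b0 = fun i => toE (f i) :=
    coe_basisOfLinearIndependentOfCardEqFinrank _ _
  let b : OrthonormalBasis (Fin d) ℝ (EuclideanSpace ℝ (Fin d)) :=
    b0.toOrthonormalBasis (by rw [hb0]; exact horthF)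
  have hb : ∀ i, b i = toE (f i) := by
    intro i
    rw [show (b : Fin d → EuclideanSpace ℝ (Fin d)) = ⇑b0 from b0.coe_toOrthonormalBasis _, hb0]
  -- Parseval-type facts
  have hpars2 : ∀ v w : Fin d → ℝ,
      (∑ j, (∑ a, f j a * v a) * (∑ a, f j a * w a)) = ∑ a, v a * w a := by
    intro v w
    have := b.sum_inner_mul_inner (toE v) (toE w)
    rw [hE] at this
    calc (∑ j, (∑ a, f j a * v a) * (∑ a, f j a * w a))
        = ∑ j, (inner ℝ (toE v) (b j) : ℝ) * inner ℝ (b j) (toE w) := by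
          refine Finset.sum_congr rfl fun j _ => ?_
          rw [hb, hE, hE]
          rw [show (∑ a, v a * f j a) = ∑ a, f j a * v a by
            exact Finset.sum_congr rfl fun a _ => mul_comm _ _]
      _ = ∑ a, v a * w a := this
  -- eigen-decomposition of quadratic form with Mhat
  have key : ∀ (v : Fin d → ℝ) (j : Fin d),
      (∑ a, f j a * (Mhat.mulVec v) a) = μ j * ∑ a, f j a * v a := by
    intro v j
    have h1 : (∑ a, f j a * (Mhat.mulVec v) a) = dotProduct (f j) (Mhat.mulVec v) := rfl
    rw [h1, Matrix.dotProduct_mulVec]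
    have h2 : Matrix.vecMul (f j) Mhat = Mhat.mulVec (f j) := by
      rw [← hMhatsymm, Matrix.vecMul_transpose, hMhatsymm]
    rw [h2, heig j]
    simp [dotProduct, Finset.mul_sum, mul_assoc]
  -- coefficients of r
  set c : Fin d → ℝ := fun i => ∑ a, f i a * r a with hc
  -- coefficients vanish below k
  have hc0 : ∀ i : Fin d, (i : ℕ) < k → c i = 0 := by
    intro i hik
    have hru' : (∑ a, f i a * u' a) = ∑ a, f i a * u a := by
      rw [hu']
      have : ∀ a, (∑ j ∈ Finset.univ.filter (fun j : Fin d => (j : ℕ) < k),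
          (∑ b, u b * f j b) • f j) a
          = ∑ j ∈ Finset.univ.filter (fun j : Fin d => (j : ℕ) < k),
            (∑ b, u b * f j b) * f j a := by
        intro a
        simp [Finset.sum_apply]
      simp_rw [this]
      have hswap := helper_swap (Finset.univ.filter (fun j : Fin d => (j : ℕ) < k))
        (fun j => ∑ b, u b * f j b) f (f i)
      calc (∑ a, f i a * ∑ j ∈ Finset.univ.filter (fun j : Fin d => (j : ℕ) < k),
              (∑ b, u b * f j b) * f j a)
          = ∑ a, (∑ j ∈ Finset.univ.filter (fun j : Fin d => (j : ℕ) < k),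
              (∑ b, u b * f j b) * f j a) * f i a := by
            exact Finset.sum_congr rfl fun a _ => mul_comm _ _
        _ = ∑ j ∈ Finset.univ.filter (fun j : Fin d => (j : ℕ) < k),
              (∑ b, u b * f j b) * ∑ a, f j a * f i a := hswap
        _ = ∑ a, f i a * u a := by
            rw [Finset.sum_eq_single i]
            · rw [horth i i, if_pos rfl, mul_one]
              exact Finset.sum_congr rfl fun a _ => mul_comm _ _
            · intro j _ hji
              rw [horth j i, if_neg hji, mul_zero]
            · intro hni
              exact absurd (Finset.mem_filter.mpr ⟨Finset.mem_univ i, hik⟩) hni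
    have : c i = (∑ a, f i a * u a) - (∑ a, f i a * u' a) := by
      rw [hc]
      simp only [hr, Pi.sub_apply, mul_sub, Finset.sum_sub_distrib]
    rw [this, hru', sub_self]
  -- t := ‖r‖²
  set t : ℝ := ∑ a, r a ^ 2 with hts
  have ht0 : 0 ≤ t := Finset.sum_nonneg fun a _ => sq_nonneg _
  have htc : t = ∑ j, c j ^ 2 := by
    have h1 : t = ∑ a, r a * r a := by
      rw [hts]; exact Finset.sum_congr rfl fun a _ => pow_two (r a)
    rw [h1, ← hpars2 r r]
    exact Finset.sum_congr rfl fun j _ => (pow_two _).symm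

  -- ⟨r,u⟩ = t
  have hrr : (∑ a, r a * r a) = t := by
    rw [hts]; exact Finset.sum_congr rfl fun a _ => (pow_two (r a)).symm
  have hru : (∑ a, r a * u a) = t := by
    have hru'0 : (∑ a, r a * u' a) = 0 := by
      rw [hu']
      have happ : ∀ a, (∑ j ∈ Finset.univ.filter (fun j : Fin d => (j : ℕ) < k),
          (∑ b, u b * f j b) • f j) a
          = ∑ j ∈ Finset.univ.filter (fun j : Fin d => (j : ℕ) < k),
            (∑ b, u b * f j b) * f j a := by
        intro a; simp [Finset.sum_apply]
      simp_rw [happ]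
      calc (∑ a, r a * ∑ j ∈ Finset.univ.filter (fun j : Fin d => (j : ℕ) < k),
              (∑ b, u b * f j b) * f j a)
          = ∑ a, (∑ j ∈ Finset.univ.filter (fun j : Fin d => (j : ℕ) < k),
              (∑ b, u b * f j b) * f j a) * r a := by
            exact Finset.sum_congr rfl fun a _ => mul_comm _ _
        _ = ∑ j ∈ Finset.univ.filter (fun j : Fin d => (j : ℕ) < k),
              (∑ b, u b * f j b) * ∑ a, f j a * r a := helper_swap _ _ _ _
        _ = 0 := by
            refine Finset.sum_eq_zero fun j hj => ?_
            have hjk : (j : ℕ) < k := (Finset.mem_filter.mp hj).2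
            rw [show (∑ a, f j a * r a) = c j from rfl, hc0 j hjk, mul_zero]
    have huu : u = u' + r := by rw [hr]; abel
    calc (∑ a, r a * u a) = ∑ a, (r a * u' a + r a * r a) := by
          refine Finset.sum_congr rfl fun a _ => ?_
          rw [huu]; simp [Pi.add_apply]; ring
      _ = (∑ a, r a * u' a) + ∑ a, r a * r a := Finset.sum_add_distrib
      _ = t := by rw [hru'0, hrr, zero_add]
  -- Mhat quadratic form in coefficients
  have hMhatquad : (∑ a, r a * (Mhat.mulVec r) a) = ∑ j, μ j * c j ^ 2 := by
    rw [← hpars2 r (Mhat.mulVec r)]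
    refine Finset.sum_congr rfl fun j _ => ?_
    rw [key r j, show (∑ a, f j a * r a) = c j from rfl]
    ring
  -- ‖·‖² = sum of squares
  have hnormsq : ∀ v : Fin d → ℝ, ‖toE v‖ ^ 2 = ∑ a, v a ^ 2 := by
    intro v
    rw [← real_inner_self_eq_norm_sq, hE]
    exact Finset.sum_congr rfl fun a _ => (pow_two (v a)).symm
  -- Weyl: eigenvalues from index k on are at most η in absolute value
  have hWeyl : ∀ i : Fin d, k ≤ (i : ℕ) → |μ i| ≤ η := by
    intro i hik
    by_contra hcon
    push_neg at hcon
    have hgLI : LinearIndependent ℝ (fun j : {j : Fin d // j ≤ i} => toE (f j.1)) :=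
      (horthF.comp (fun j : {j : Fin d // j ≤ i} => j.1) Subtype.val_injective).linearIndependent
    have hgLI' : LinearIndependent ℝ (fun j : {j : Fin d // j ≤ i} => f j.1) :=
      hgLI.map' (WithLp.linearEquiv 2 ℝ (Fin d → ℝ)).toLinearMap
        (LinearEquiv.ker _)
    set W : Submodule ℝ (Fin d → ℝ) :=
      Submodule.span ℝ (Set.range fun j : {j : Fin d // j ≤ i} => f j.1) with hW
    have hcardsub : Fintype.card {j : Fin d // j ≤ i} = (i : ℕ) + 1 := by
      have e : {j : Fin d // j ≤ i} ≃ Fin ((i : ℕ) + 1) :=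
        { toFun := fun j => ⟨(j : Fin d), Nat.lt_succ_of_le j.2⟩
          invFun := fun a => ⟨⟨(a : ℕ), lt_of_le_of_lt (Nat.le_of_lt_succ a.isLt) i.isLt⟩,
            Fin.mk_le_mk.mpr (Nat.le_of_lt_succ a.isLt)⟩
          left_inv := fun j => by ext; rfl
          right_inv := fun a => by ext; rfl }
      rw [Fintype.card_congr e, Fintype.card_fin]
    have hWrank : finrank ℝ W = (i : ℕ) + 1 := by
      rw [hW, finrank_span_eq_card hgLI', hcardsub]
    have hKrank : (d : ℕ) - k ≤ finrank ℝ (LinearMap.ker M.mulVecLin) := by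
      have h1 := LinearMap.finrank_range_add_finrank_ker (M.mulVecLin)
      have h2 : finrank ℝ (Fin d → ℝ) = d := by simp
      have h3 : finrank ℝ (LinearMap.range M.mulVecLin) = M.rank := rfl
      omega
    have hint : 0 < finrank ℝ ↥(W ⊓ LinearMap.ker M.mulVecLin) := by
      have h1 := Submodule.finrank_sup_add_finrank_inf_eq W (LinearMap.ker M.mulVecLin)
      have h2 : finrank ℝ ↥(W ⊔ LinearMap.ker M.mulVecLin) ≤ d := by
        have h4 := Submodule.finrank_le (W ⊔ LinearMap.ker M.mulVecLin)
        simpa using h4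
      have h5 : (i : ℕ) < d := i.isLt
      omega
    have hnt : Nontrivial ↥(W ⊓ LinearMap.ker M.mulVecLin) := Module.finrank_pos_iff.mp hint
    obtain ⟨⟨w, hwmem⟩, hwne⟩ := exists_ne (0 : ↥(W ⊓ LinearMap.ker M.mulVecLin))
    have hw0 : w ≠ 0 := fun h => hwne (Subtype.ext h)
    have hwW : w ∈ W := hwmem.1
    have hwK : M.mulVec w = 0 := by simpa using hwmem.2
    set cw : Fin d → ℝ := fun j => ∑ a, f j a * w a with hcw
    have hcw0 : ∀ j : Fin d, i < j → cw j = 0 := by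
      intro j hj
      let ℓ : (Fin d → ℝ) →ₗ[ℝ] ℝ :=
        { toFun := fun v => ∑ a, f j a * v a
          map_add' := by intro x y; simp [mul_add, Finset.sum_add_distrib]
          map_smul' := by
            intro m x
            simp only [Pi.smul_apply, smul_eq_mul, RingHom.id_apply, Finset.mul_sum]
            exact Finset.sum_congr rfl fun a _ => by ring }
      have hle : W ≤ LinearMap.ker ℓ := by
        rw [hW, Submodule.span_le]
        rintro _ ⟨j', rfl⟩
        have hne : j ≠ (j' : Fin d) := by
          intro h
          have : (j : Fin d) ≤ i := h ▸ j'.2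
          exact absurd hj (not_lt.mpr this)
        have : (∑ a, f j a * f (j' : Fin d) a) = 0 := by
          rw [horth j (j' : Fin d), if_neg hne]
        simpa [ℓ, LinearMap.mem_ker] using this
      have := hle hwW
      simpa [ℓ, LinearMap.mem_ker, hcw] using this
    have hwpars : (∑ j, cw j ^ 2) = ∑ a, w a ^ 2 := by
      calc (∑ j, cw j ^ 2)
          = ∑ j, (∑ a, f j a * w a) * (∑ a, f j a * w a) :=
            Finset.sum_congr rfl fun j _ => pow_two _
        _ = ∑ a, w a * w a := hpars2 w w
        _ = ∑ a, w a ^ 2 := Finset.sum_congr rfl fun a _ => (pow_two _).symm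
    have hMwpars : (∑ a, (Mhat.mulVec w) a ^ 2) = ∑ j, (μ j * cw j) ^ 2 := by
      calc (∑ a, (Mhat.mulVec w) a ^ 2)
          = ∑ a, (Mhat.mulVec w) a * (Mhat.mulVec w) a :=
            Finset.sum_congr rfl fun a _ => pow_two _
        _ = ∑ j, (∑ a, f j a * (Mhat.mulVec w) a) * (∑ a, f j a * (Mhat.mulVec w) a) :=
            (hpars2 (Mhat.mulVec w) (Mhat.mulVec w)).symm
        _ = ∑ j, (μ j * cw j) ^ 2 := by
            refine Finset.sum_congr rfl fun j _ => ?_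
            rw [key w j, show (∑ a, f j a * w a) = cw j from rfl, pow_two]
    have hlower : μ i ^ 2 * ∑ a, w a ^ 2 ≤ ∑ a, (Mhat.mulVec w) a ^ 2 := by
      rw [hMwpars, ← hwpars, Finset.mul_sum]
      refine Finset.sum_le_sum fun j _ => ?_
      rcases le_or_gt j i with hji | hij
      · have h1 : |μ i| ≤ |μ j| := hsort j i hji
        have h2 : μ i ^ 2 ≤ μ j ^ 2 := by
          nlinarith [abs_nonneg (μ i), sq_abs (μ i), sq_abs (μ j)]
        nlinarith [sq_nonneg (cw j)]
      · rw [hcw0 j hij]; simp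
    have hupper : (∑ a, (Mhat.mulVec w) a ^ 2) ≤ η ^ 2 * ∑ a, w a ^ 2 := by
      have hEq : Mhat.mulVec w = (Mhat - M).mulVec w := by
        rw [Matrix.sub_mulVec, hwK, sub_zero]
      have h3 : ‖toE ((Mhat - M).mulVec w)‖ ≤ ‖Mhat - M‖ * ‖toE w‖ :=
        Matrix.l2_opNorm_mulVec (Mhat - M) (toE w)
      have h5 : ‖Mhat - M‖ ≤ η := by rw [norm_sub_rev]; exact hclose
      have h6 : ‖toE ((Mhat - M).mulVec w)‖ ^ 2 ≤ η ^ 2 * ‖toE w‖ ^ 2 := by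
        have hη' : ‖toE ((Mhat - M).mulVec w)‖ ≤ η * ‖toE w‖ := by
          refine le_trans h3 ?_
          exact mul_le_mul_of_nonneg_right h5 (norm_nonneg _)
        nlinarith [norm_nonneg (toE w), norm_nonneg (toE ((Mhat - M).mulVec w)),
          mul_nonneg hη0 (norm_nonneg (toE w))]
      rw [hEq]
      calc (∑ a, ((Mhat - M).mulVec w) a ^ 2)
          = ‖toE ((Mhat - M).mulVec w)‖ ^ 2 := (hnormsq _).symm
        _ ≤ η ^ 2 * ‖toE w‖ ^ 2 := h6
        _ = η ^ 2 * ∑ a, w a ^ 2 := by rw [hnormsq]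
    have hwpos : 0 < ∑ a, w a ^ 2 := by
      obtain ⟨a, ha⟩ := Function.ne_iff.mp hw0
      exact Finset.sum_pos' (fun a _ => sq_nonneg _)
        ⟨a, Finset.mem_univ a, lt_of_le_of_ne (sq_nonneg _) (Ne.symm (pow_ne_zero 2 ha))⟩
    have hmusq : μ i ^ 2 ≤ η ^ 2 := by
      have h7 := le_trans hlower hupper
      nlinarith
    nlinarith [abs_nonneg (μ i), sq_abs (μ i)]
  -- bound the Mhat quadratic form
  have hsum : (∑ j, μ j * c j ^ 2) ≤ η * t := by
    rw [htc, Finset.mul_sum]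
    refine Finset.sum_le_sum fun j _ => ?_
    rcases lt_or_ge (j : ℕ) k with hj | hj
    · rw [hc0 j hj]; simp
    · have h1 := abs_le.mp (hWeyl j hj)
      nlinarith [sq_nonneg (c j)]
  -- bound the (M - Mhat) quadratic form
  have hdiffbound : (∑ a, r a * ((M - Mhat).mulVec r) a) ≤ η * t := by
    have h1 : (∑ a, r a * ((M - Mhat).mulVec r) a)
        = (inner ℝ (toE r) (toE ((M - Mhat).mulVec r)) : ℝ) := (hE _ _).symm
    have h2 : (inner ℝ (toE r) (toE ((M - Mhat).mulVec r)) : ℝ)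
        ≤ ‖toE r‖ * ‖toE ((M - Mhat).mulVec r)‖ := real_inner_le_norm _ _
    have h3 : ‖toE ((M - Mhat).mulVec r)‖ ≤ ‖M - Mhat‖ * ‖toE r‖ :=
      Matrix.l2_opNorm_mulVec (M - Mhat) (toE r)
    have h5 : ‖toE r‖ ^ 2 = t := by rw [hnormsq]
    nlinarith [norm_nonneg (toE r), norm_nonneg (toE ((M - Mhat).mulVec r)),
      norm_nonneg (M - Mhat)]
  -- split the M quadratic form
  have hsplit : (∑ a, r a * (M.mulVec r) a)
      = (∑ a, r a * ((M - Mhat).mulVec r) a) + ∑ a, r a * (Mhat.mulVec r) a := by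
    rw [← Finset.sum_add_distrib]
    refine Finset.sum_congr rfl fun a _ => ?_
    rw [Matrix.sub_mulVec]
    simp only [Pi.sub_apply]
    ring
  have hfinal : C₁ * t ^ 2 - C₂ ≤ 2 * η * t := by
    rw [hru, hsplit] at hquad
    rw [hMhatquad] at hquad
    linarith
  have hT := quad_solve C₁ C₂ η t hC₁ hC₂ hη0 ht0 hfinal
  calc Real.sqrt t ≤ Real.sqrt (2 * η / C₁ + Real.sqrt (C₂ / C₁)) := Real.sqrt_le_sqrt hT
    _ ≤ Real.sqrt (2 * η / C₁) + Real.sqrt (Real.sqrt (C₂ / C₁)) :=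
        sqrt_add_le'' _ _ (by positivity) (Real.sqrt_nonneg _)
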